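/- Let X be a T1 space with at least two points and f a nonzero zero divisor in C(X)_F such that X \ Z(f) contains at least two points. Then there exists a vertex g of Γ(C(X)_F) with d(f,g) = 3, so e(f) = 3. -/

import Mathlib

open SimpleGraph

/-- `f` belongs to `C(X)_F` : it is continuous outside some finite set. -/
def CF (X : Type*) [TopologicalSpace X] (f : X → ℝ) : Prop :=
  ∃ F : Set X, F.Finite ∧ ContinuousOn f Fᶜ

/-- `f` is a nonzero zero divisor of the ring `C(X)_F`. -/
def ZD (X : Type*) [TopologicalSpace X] (f : X → ℝ) : Prop :=
  CF X f ∧ f ≠ 0 ∧ ∃ g : X → ℝ, CF X g ∧ g ≠ 0 ∧ f * g = 0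

/-- The vertex set of the zero divisor graph of `C(X)_F`. -/
def Vtx (X : Type*) [TopologicalSpace X] := {f : X → ℝ // ZD X f}

/-- The zero divisor graph `Γ(C(X)_F)`: vertices are the nonzero zero divisors,
`f` and `g` adjacent iff `f ≠ g` and `f * g = 0`. -/
def Γ (X : Type*) [TopologicalSpace X] : SimpleGraph (Vtx X) where
  Adj f g := f ≠ g ∧ (f.1 * g.1 = 0)
  symm := ⟨fun f g ⟨h1, h2⟩ => ⟨h1.symm, by rw [mul_comm] at h2; exact h2⟩⟩
  loopless := ⟨fun f ⟨h, _⟩ => h rfl⟩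

/-- The zero set of a function. -/
def Z {X : Type*} (f : X → ℝ) : Set X := {x | f x = 0}

/-- The characteristic function of a point. -/
noncomputable def chi {X : Type*} (x : X) : X → ℝ := Set.indicator {x} (fun _ => 1)

section helpers
variable {X : Type*} [TopologicalSpace X]

omit [TopologicalSpace X] in
lemma chi_self (c : X) : chi c c = 1 := by simp [chi]

omit [TopologicalSpace X] in
lemma chi_ne (c : X) {p : X} (h : p ≠ c) : chi c p = 0 := by
  simp [chi, Set.indicator_of_notMem, h]

omit [TopologicalSpace X] in
lemma chi_mul_eq_zero {c : X} {h : X → ℝ} (hc : h c = 0) : chi c * h = 0 := by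
  funext p
  by_cases hp : p = c
  · subst hp; simp [hc]
  · simp [chi_ne c hp]

omit [TopologicalSpace X] in
lemma mul_chi_eq_zero {c : X} {h : X → ℝ} (hc : h c = 0) : h * chi c = 0 := by
  rw [mul_comm]; exact chi_mul_eq_zero hc

omit [TopologicalSpace X] in
lemma chi_ne_zero (c : X) : chi c ≠ (0 : X → ℝ) := fun h => by
  have := congrFun h c; rw [chi_self] at this; norm_num at this

lemma CF_chi [T1Space X] (c : X) : CF X (chi c) := by
  refine ⟨{c}, Set.finite_singleton c, ?_⟩
  apply ContinuousOn.congr continuousOn_const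
  intro p hp
  exact chi_ne c hp

lemma ZD_chi [T1Space X] (c e : X) (hce : e ≠ c) : ZD X (chi c) :=
  ⟨CF_chi c, chi_ne_zero c, chi e, CF_chi e, chi_ne_zero e,
    chi_mul_eq_zero (chi_ne e hce.symm)⟩

lemma vtx_ne {a b : Vtx X} (c : X) (h : a.1 c ≠ b.1 c) : a ≠ b :=
  fun he => h (by rw [he])

lemma exists_zero (g : Vtx X) : ∃ d, g.1 d = 0 := by
  obtain ⟨_, _, h, _, hne, hgh⟩ := g.2
  obtain ⟨d, hd⟩ := Function.ne_iff.mp hne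
  refine ⟨d, ?_⟩
  have := congrFun hgh d
  simp only [Pi.mul_apply, Pi.zero_apply] at this hd
  exact (mul_eq_zero.mp this).resolve_right hd

end helpers


/-- If `f` is a vertex of `Γ(C(X)_F)` and `X \ Z(f)` has at least two points, then
some vertex is at distance exactly 3 from `f`; as every vertex is within distance 3,
`e(f) = 3`. -/
theorem stmt16 {X : Type*} [TopologicalSpace X] [T1Space X]
    (f : Vtx X) (x y : X) (hxy : x ≠ y) (hx : f.1 x ≠ 0) (hy : f.1 y ≠ 0) :
    (∀ g : Vtx X, g ≠ f → (Γ X).Reachable f g ∧ (Γ X).dist f g ≤ 3) ∧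
      (∃ g : Vtx X, g ≠ f ∧ (Γ X).dist f g = 3) := by
  classical
  have hpair : ∀ c : X, ∃ e, e ≠ c := by
    intro c
    by_cases hc : c = x
    · exact ⟨y, by rw [hc]; exact hxy.symm⟩
    · exact ⟨x, fun h => hc h.symm⟩
  have chiV : ∀ c : X, ZD X (chi c) := fun c => by
    obtain ⟨e, he⟩ := hpair c
    exact ZD_chi c e he
  -- Part 1
  have part1 : ∀ g : Vtx X, g ≠ f → (Γ X).Reachable f g ∧ (Γ X).dist f g ≤ 3 := by
    intro g hgf
    obtain ⟨c, hc⟩ := exists_zero f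
    obtain ⟨d, hd⟩ := exists_zero g
    have hfc : (Γ X).Adj f ⟨chi c, chiV c⟩ := by
      refine ⟨vtx_ne c (show f.1 c ≠ chi c c from ?_),
        show f.1 * chi c = 0 from mul_chi_eq_zero hc⟩
      rw [hc, chi_self]; norm_num
    have hdg : (Γ X).Adj ⟨chi d, chiV d⟩ g := by
      refine ⟨vtx_ne d (show chi d d ≠ g.1 d from ?_),
        show chi d * g.1 = 0 from chi_mul_eq_zero hd⟩
      rw [hd, chi_self]; norm_num
    by_cases hcd : c = d
    · subst hcd
      refine ⟨⟨Walk.cons hfc (Walk.cons hdg Walk.nil)⟩,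
        le_trans ((Γ X).dist_le (Walk.cons hfc (Walk.cons hdg Walk.nil))) ?_⟩
      show 2 ≤ 3
      norm_num [SimpleGraph.Walk.length_cons, SimpleGraph.Walk.length_nil]
    · have hcd' : (Γ X).Adj (⟨chi c, chiV c⟩ : Vtx X) ⟨chi d, chiV d⟩ := by
        refine ⟨vtx_ne c (show chi c c ≠ chi d c from ?_),
          show chi c * chi d = 0 from chi_mul_eq_zero (chi_ne d hcd)⟩
        rw [chi_self, chi_ne d hcd]; norm_num
      refine ⟨⟨Walk.cons hfc (Walk.cons hcd' (Walk.cons hdg Walk.nil))⟩,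
        le_trans ((Γ X).dist_le (Walk.cons hfc (Walk.cons hcd' (Walk.cons hdg Walk.nil)))) ?_⟩
      show 3 ≤ 3
      norm_num [SimpleGraph.Walk.length_cons, SimpleGraph.Walk.length_nil]
  refine ⟨part1, ?_⟩
  -- Part 2 : g = 1 - chi x
  set gf : X → ℝ := fun p => if p = x then 0 else 1 with hgf
  have hgfx : gf x = 0 := by simp [hgf]
  have hgfne : ∀ p, p ≠ x → gf p = 1 := fun p hp => by simp [hgf, hp]
  have hgZD : ZD X gf := by
    refine ⟨⟨{x}, Set.finite_singleton x, ?_⟩, ?_, chi x, CF_chi x, chi_ne_zero x, ?_⟩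
    · apply ContinuousOn.congr (continuousOn_const (c := (1:ℝ)))
      intro p hp; exact hgfne p hp
    · intro h
      have := congrFun h y
      rw [hgfne y hxy.symm] at this
      norm_num at this
    · funext p
      by_cases hp : p = x
      · subst hp; simp [hgfx]
      · simp [chi_ne x hp]
  set g : Vtx X := ⟨gf, hgZD⟩ with hgdef
  have hgfne' : g ≠ f := vtx_ne x (show gf x ≠ f.1 x from by rw [hgfx]; exact fun h => hx h.symm)
  refine ⟨g, hgfne', ?_⟩
  obtain ⟨hreach, hle⟩ := part1 g hgfne'
  refine le_antisymm hle ?_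
  by_contra hlt
  push_neg at hlt
  have hnadj : ¬ (Γ X).Adj f g := by
    rintro ⟨-, hmul⟩
    have := congrFun hmul y
    simp only [Pi.mul_apply, Pi.zero_apply] at this
    change f.1 y * gf y = 0 at this
    rw [hgfne y hxy.symm, mul_one] at this
    exact hy this
  have h0 : (Γ X).dist f g ≠ 0 := fun h => hgfne'.symm (hreach.dist_eq_zero_iff.mp h)
  have h1 : (Γ X).dist f g ≠ 1 := fun h => hnadj (SimpleGraph.dist_eq_one_iff_adj.mp h)
  have hdist : (Γ X).dist f g = 2 := by omega
  obtain ⟨p, hp⟩ := hreach.exists_walk_length_eq_dist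
  rw [hdist] at hp
  have had1 : (Γ X).Adj f (p.getVert 1) := by
    have := p.adj_getVert_succ (i := 0) (by omega)
    simpa using this
  have had2 : (Γ X).Adj (p.getVert 1) g := by
    have := p.adj_getVert_succ (i := 1) (by omega)
    have hv : p.getVert 2 = g := by rw [← hp]; exact p.getVert_length
    rwa [hv] at this
  set h := p.getVert 1 with hh
  have hzero : ∀ q, q ≠ x → h.1 q = 0 := by
    intro q hq
    have := congrFun had2.2 q
    simp only [Pi.mul_apply, Pi.zero_apply] at this
    change h.1 q * gf q = 0 at this
    rw [hgfne q hq, mul_one] at this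
    exact this
  have hhx : h.1 x ≠ 0 := by
    intro h0'
    refine h.2.2.1 (funext fun q => ?_)
    by_cases hq : q = x
    · subst hq; exact h0'
    · exact hzero q hq
  have := congrFun had1.2 x
  simp only [Pi.mul_apply, Pi.zero_apply] at this
  exact hhx ((mul_eq_zero.mp this).resolve_left hx)
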